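/- For all integers s ≥ 1 and n ≥ 1, the Lah number of order s and the Lah number with higher level at k = n−1 are related by 2^{s−1} · T_s(n, n−1) = L_s(n, n−1). -/
import Mathlib


open Finset Polynomial

/-- Lah numbers with higher level: `lahH s n k` satisfies
`lahH s 0 0 = 1`, `lahH s n 0 = lahH s 0 k = 0` for `n, k > 0`, and
`lahH s n k = lahH s (n-1) (k-1) + (n+k-1)^s * lahH s (n-1) k` for `n, k ≥ 1`. -/
def lahH (s : ℕ) : ℕ → ℕ → ℕ
  | 0, 0 => 1
  | 0, _ + 1 => 0
  | _ + 1, 0 => 0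
  | n + 1, k + 1 => lahH s n k + (n + k + 1) ^ s * lahH s n (k + 1)

/-- Stirling numbers of the first kind with higher level. -/
def stirling1H (s : ℕ) : ℕ → ℕ → ℕ
  | 0, 0 => 1
  | 0, _ + 1 => 0
  | _ + 1, 0 => 0
  | n + 1, k + 1 => stirling1H s n k + n ^ s * stirling1H s n (k + 1)

/-- Stirling numbers of the second kind with higher level. -/
def stirling2H (s : ℕ) : ℕ → ℕ → ℕ
  | 0, 0 => 1
  | 0, _ + 1 => 0
  | _ + 1, 0 => 0
  | n + 1, k + 1 => stirling2H s n k + (k + 1) ^ s * stirling2H s n (k + 1)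

/-- Ordinary Stirling numbers of the second kind. -/
def stirling2 : ℕ → ℕ → ℕ
  | 0, 0 => 1
  | 0, _ + 1 => 0
  | _ + 1, 0 => 0
  | n + 1, k + 1 => stirling2 n k + (k + 1) * stirling2 n (k + 1)

/-- Lah numbers of order `s`: `lahOrd s n k = ∑_{j=k}^{n} c_s(n,j) * S_s(j,k)`. -/
def lahOrd (s n k : ℕ) : ℕ := ∑ j ∈ Finset.Icc k n, stirling1H s n j * stirling2H s j k

/-- Lah polynomial with higher level `L_n^s(x) = ∑_{k=0}^{n} L_s(n,k) x^k`. -/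
noncomputable def lahHPoly (s n : ℕ) : Polynomial ℤ :=
  ∑ k ∈ Finset.range (n + 1), Polynomial.C (lahH s n k : ℤ) * Polynomial.X ^ k

/-- Lah polynomial of order `s`: `ℒ_n^s(x) = ∑_{k=0}^{n} T_s(n,k) x^k`. -/
noncomputable def lahOrdPoly (s n : ℕ) : Polynomial ℤ :=
  ∑ k ∈ Finset.range (n + 1), Polynomial.C (lahOrd s n k : ℤ) * Polynomial.X ^ k

lemma lahH_eq_zero (s : ℕ) : ∀ n k, n < k → lahH s n k = 0 := by
  intro n
  induction n with
  | zero => intro k hk; cases k with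
    | zero => omega
    | succ k => rfl
  | succ n ih =>
    intro k hk
    cases k with
    | zero => omega
    | succ k =>
      simp [lahH, ih k (by omega), ih (k+1) (by omega)]

lemma stirling1H_eq_zero (s : ℕ) : ∀ n k, n < k → stirling1H s n k = 0 := by
  intro n
  induction n with
  | zero => intro k hk; cases k with
    | zero => omega
    | succ k => rfl
  | succ n ih =>
    intro k hk
    cases k with
    | zero => omega
    | succ k =>
      simp [stirling1H, ih k (by omega), ih (k+1) (by omega)]

lemma stirling2H_eq_zero (s : ℕ) : ∀ n k, n < k → stirling2H s n k = 0 := by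
  intro n
  induction n with
  | zero => intro k hk; cases k with
    | zero => omega
    | succ k => rfl
  | succ n ih =>
    intro k hk
    cases k with
    | zero => omega
    | succ k =>
      simp [stirling2H, ih k (by omega), ih (k+1) (by omega)]

lemma lahH_diag (s : ℕ) : ∀ n, lahH s n n = 1 := by
  intro n
  induction n with
  | zero => rfl
  | succ n ih => simp [lahH, ih, lahH_eq_zero s n (n+1) (by omega)]

lemma stirling1H_diag (s : ℕ) : ∀ n, stirling1H s n n = 1 := by
  intro n
  induction n with
  | zero => rfl
  | succ n ih => simp [stirling1H, ih, stirling1H_eq_zero s n (n+1) (by omega)]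

lemma stirling2H_diag (s : ℕ) : ∀ n, stirling2H s n n = 1 := by
  intro n
  induction n with
  | zero => rfl
  | succ n ih => simp [stirling2H, ih, stirling2H_eq_zero s n (n+1) (by omega)]

lemma stirling1H_sub (s : ℕ) (hs : 1 ≤ s) :
    ∀ n, stirling1H s (n + 1) n = ∑ j ∈ Finset.range (n + 1), j ^ s := by
  intro n
  induction n with
  | zero => simp [stirling1H, Nat.zero_pow (by omega : 0 < s)]
  | succ n ih =>
    rw [Finset.sum_range_succ, ← ih]
    simp [stirling1H, stirling1H_diag, stirling1H_eq_zero s n (n+1) (by omega), Nat.add_comm]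

lemma stirling2H_sub (s : ℕ) (hs : 1 ≤ s) :
    ∀ n, stirling2H s (n + 1) n = ∑ j ∈ Finset.range (n + 1), j ^ s := by
  intro n
  induction n with
  | zero => simp [stirling2H, Nat.zero_pow (by omega : 0 < s)]
  | succ n ih =>
    rw [Finset.sum_range_succ, ← ih]
    simp [stirling2H, stirling2H_diag, stirling2H_eq_zero s n (n+1) (by omega), Nat.add_comm]

lemma lahH_sub (s : ℕ) (hs : 1 ≤ s) :
    ∀ n, lahH s (n + 1) n = ∑ j ∈ Finset.range (n + 1), (2 * j) ^ s := by
  intro n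
  induction n with
  | zero => simp [lahH, Nat.zero_pow (by omega : 0 < s)]
  | succ n ih =>
    rw [Finset.sum_range_succ, ← ih]
    have : n + 1 + n + 1 = 2 * (n + 1) := by ring
    simp only [lahH, lahH_diag, lahH_eq_zero s n (n+1) (by omega), Nat.mul_zero, Nat.add_zero, Nat.mul_one]
    rw [this]

theorem two_pow_mul_lahOrd_eq_lahH (s n : ℕ) (hs : 1 ≤ s) (hn : 1 ≤ n) :
    2 ^ (s - 1) * lahOrd s n (n - 1) = lahH s n (n - 1) := by
  obtain ⟨m, rfl⟩ : ∃ m, n = m + 1 := ⟨n - 1, by omega⟩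
  simp only [Nat.add_sub_cancel]
  have hIcc : Finset.Icc m (m + 1) = {m, m + 1} := by
    ext x; simp [Finset.mem_Icc]; omega
  have : lahOrd s (m + 1) m = 2 * ∑ j ∈ Finset.range (m + 1), j ^ s := by
    rw [lahOrd, hIcc, Finset.sum_insert (by simp), Finset.sum_singleton,
      stirling1H_sub s hs, stirling2H_sub s hs, stirling1H_diag, stirling2H_diag]
    ring
  rw [this, lahH_sub s hs]
  rw [Finset.mul_sum, Finset.mul_sum]
  refine Finset.sum_congr rfl fun j _ => ?_
  rw [Nat.mul_pow]
  have h2 : 2 ^ (s - 1) * 2 = 2 ^ s := by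
    rw [← pow_succ]; congr 1; omega
  rw [← h2]
  ring
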